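/- Assume N > 1 and 0 < α ≤ 1, and let the regularizer be G_TV; set θ = (1−α)·C/α and, for each i ∈ [M], k̂_i = max{k ∈ [N] : d_{i j_k^i} − d_{i j_1^i} < θ}. Define γ* ∈ ℝ^{M×N} row-wise by: for 2 ≤ k ≤ N, γ*_{i j_k^i} = 1/(MN) if k ≤ k̂_i and γ*_{i j_k^i} = 0 otherwise, and γ*_{i j_1^i} = 1/M − Σ_{k=2}^{N} γ*_{i j_k^i}. Let γ''' ∈ ℝ^{M×N} be feasible with γ'''_{i j_k^i} = 0 for all i ∈ [M] and all k > k̂_i, and with γ'''_{i j_k^i} ≤ 1/(MN) for all i ∈ [M] and all 2 ≤ k ≤ k̂_i. Then L(γ*) ≤ L(γ'''). -/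

import Mathlib

open Finset

lemma row_ineq {N : ℕ} (hN : 1 < N) {kh : ℕ} (hk1 : 1 ≤ kh) (hk2 : kh ≤ N)
    (e g h : Fin N → ℝ) (hmono : Monotone e)
    {a β t : ℝ} (ha : 0 < a) (hβ : 0 ≤ β) (ht : 0 < t)
    (hthr : a * (e ⟨kh - 1, by omega⟩ - e ⟨0, by omega⟩) < β)
    (hg : ∀ k : Fin N, (k : ℕ) ≠ 0 → g k = if (k : ℕ) < kh then t else 0)
    (hg0 : g ⟨0, by omega⟩ = N * t - ∑ k ∈ univ.filter (fun k : Fin N => (k : ℕ) ≠ 0), g k)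
    (hh1 : ∀ k, 0 ≤ h k) (hh2 : ∑ k, h k = N * t)
    (hh3 : ∀ k : Fin N, kh ≤ (k : ℕ) → h k = 0)
    (hh4 : ∀ k : Fin N, 1 ≤ (k : ℕ) → (k : ℕ) < kh → h k ≤ t) :
    a * (∑ k, g k * e k) + β * ((1/2) * ∑ k, |g k - t|)
      ≤ a * (∑ k, h k * e k) + β * ((1/2) * ∑ k, |h k - t|) := by
  set z : Fin N := ⟨0, by omega⟩ with hz
  set A := univ.filter (fun k : Fin N => (k : ℕ) ≠ 0 ∧ (k : ℕ) < kh) with hA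
  set B := univ.filter (fun k : Fin N => (k : ℕ) ≠ 0 ∧ ¬ (k : ℕ) < kh) with hB
  have hfilter_split : ∀ F : Fin N → ℝ,
      ∑ k ∈ univ.filter (fun k : Fin N => (k : ℕ) ≠ 0), F k
        = ∑ k ∈ A, F k + ∑ k ∈ B, F k := by
    intro F
    have := Finset.sum_filter_add_sum_filter_not
      (univ.filter (fun k : Fin N => (k : ℕ) ≠ 0)) (fun k : Fin N => (k : ℕ) < kh) F
    rw [Finset.filter_filter, Finset.filter_filter] at this
    exact this.symm
  have hsplit : ∀ F : Fin N → ℝ,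
      ∑ k, F k = F z + (∑ k ∈ A, F k + ∑ k ∈ B, F k) := by
    intro F
    have h0 : (univ : Finset (Fin N))
        = insert z (univ.filter fun k : Fin N => (k : ℕ) ≠ 0) := by
      ext k
      simp only [mem_univ, mem_insert, mem_filter, true_and, true_iff]
      by_cases hk : (k : ℕ) = 0
      · exact Or.inl (Fin.ext hk)
      · exact Or.inr hk
    rw [h0, Finset.sum_insert (by simp [hz]), hfilter_split]
  have hmemA : ∀ k ∈ A, (k : ℕ) ≠ 0 ∧ (k : ℕ) < kh := by
    intro k hk; simpa [hA] using hk
  have hmemB : ∀ k ∈ B, (k : ℕ) ≠ 0 ∧ ¬ (k : ℕ) < kh := by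
    intro k hk; simpa [hB] using hk
  have hgA : ∀ k ∈ A, g k = t := by
    intro k hk
    obtain ⟨h1, h2⟩ := hmemA k hk
    rw [hg k h1, if_pos h2]
  have hgB : ∀ k ∈ B, g k = 0 := by
    intro k hk
    obtain ⟨h1, h2⟩ := hmemB k hk
    rw [hg k h1, if_neg h2]
  have hhB : ∀ k ∈ B, h k = 0 := by
    intro k hk
    exact hh3 k (Nat.le_of_not_lt (hmemB k hk).2)
  have hhA : ∀ k ∈ A, h k ≤ t := by
    intro k hk
    obtain ⟨h1, h2⟩ := hmemA k hk
    exact hh4 k (Nat.one_le_iff_ne_zero.mpr h1) h2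
  -- cardinality bound
  have hcardA : (A.card : ℝ) ≤ (N : ℝ) - 1 := by
    have hsub : A ⊆ univ.erase z := by
      intro k hk
      refine mem_erase.mpr ⟨?_, mem_univ k⟩
      intro hkz
      exact (hmemA k hk).1 (by rw [hkz])
    have h1 := Finset.card_le_card hsub
    rw [Finset.card_erase_of_mem (mem_univ z), Finset.card_univ, Fintype.card_fin] at h1
    have : (A.card : ℝ) ≤ ((N - 1 : ℕ) : ℝ) := by exact_mod_cast h1
    calc (A.card : ℝ) ≤ ((N - 1 : ℕ) : ℝ) := this
      _ = (N : ℝ) - 1 := by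
          have : (1:ℕ) ≤ N := by omega
          push_cast [Nat.cast_sub this]
          ring
  -- value of g z and h z
  have hsum_gA : ∑ k ∈ A, g k = A.card * t := by
    rw [Finset.sum_congr rfl hgA, Finset.sum_const, nsmul_eq_mul]
  have hsum_gB : ∑ k ∈ B, g k = 0 := Finset.sum_eq_zero hgB
  have hsum_hB : ∑ k ∈ B, h k = 0 := Finset.sum_eq_zero hhB
  have hgz : g z = N * t - A.card * t := by
    rw [hg0, hfilter_split g, hsum_gA, hsum_gB]; ring
  have hSAh_le : ∑ k ∈ A, h k ≤ A.card * t := by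
    calc ∑ k ∈ A, h k ≤ ∑ k ∈ A, t := Finset.sum_le_sum hhA
      _ = A.card * t := by rw [Finset.sum_const, nsmul_eq_mul]
  have hhz : h z = N * t - ∑ k ∈ A, h k := by
    have := hsplit h
    rw [hh2, hsum_hB] at this
    linarith
  have hgz_ge : t ≤ g z := by
    rw [hgz]
    nlinarith [mul_le_mul_of_nonneg_right hcardA ht.le]
  have hhz_ge : t ≤ h z := by
    rw [hhz]; nlinarith [mul_le_mul_of_nonneg_right hcardA ht.le]
  -- pieces
  have p4 : ∑ k ∈ A, |g k - t| = 0 := by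
    apply Finset.sum_eq_zero
    intro k hk; rw [hgA k hk]; simp
  have p5 : ∑ k ∈ B, |g k - t| = ∑ k ∈ B, t := by
    apply Finset.sum_congr rfl
    intro k hk; rw [hgB k hk, zero_sub, abs_neg, abs_of_pos ht]
  have p6 : ∑ k ∈ A, |h k - t| = A.card * t - ∑ k ∈ A, h k := by
    rw [show (A.card : ℝ) * t - ∑ k ∈ A, h k = ∑ k ∈ A, (t - h k) by
      rw [Finset.sum_sub_distrib, Finset.sum_const, nsmul_eq_mul]]
    apply Finset.sum_congr rfl
    intro k hk
    rw [abs_of_nonpos (by linarith [hhA k hk])]; ring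
  have p7 : ∑ k ∈ B, |h k - t| = ∑ k ∈ B, t := by
    apply Finset.sum_congr rfl
    intro k hk; rw [hhB k hk, zero_sub, abs_neg, abs_of_pos ht]
  have p1 : ∑ k ∈ A, g k * e k = ∑ k ∈ A, t * e k := by
    apply Finset.sum_congr rfl
    intro k hk; rw [hgA k hk]
  have p2 : ∑ k ∈ B, g k * e k = 0 := by
    apply Finset.sum_eq_zero; intro k hk; rw [hgB k hk, zero_mul]
  have p3 : ∑ k ∈ B, h k * e k = 0 := by
    apply Finset.sum_eq_zero; intro k hk; rw [hhB k hk, zero_mul]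
  have pgz : |g z - t| = g z - t := abs_of_nonneg (by linarith)
  have phz : |h z - t| = h z - t := abs_of_nonneg (by linarith)
  -- main difference identity
  have main : a * (∑ k, g k * e k) + β * ((1/2) * ∑ k, |g k - t|)
      - (a * (∑ k, h k * e k) + β * ((1/2) * ∑ k, |h k - t|))
      = a * (∑ k ∈ A, t * e k - ∑ k ∈ A, h k * e k)
        - ((A.card : ℝ) * t - ∑ k ∈ A, h k) * (a * e z + β) := by
    rw [hsplit (fun k => g k * e k), hsplit (fun k => h k * e k),
        hsplit (fun k => |g k - t|), hsplit (fun k => |h k - t|)]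
    rw [p1, p2, p3, p4, p5, p6, p7, pgz, phz, hgz, hhz]
    ring
  -- key bound
  have hebound : e ⟨kh - 1, by omega⟩ < e z + β / a := by
    have := (lt_div_iff₀' ha).mpr hthr
    linarith
  have hterm : ∀ k ∈ A, t * e k - h k * e k ≤ (t - h k) * (e z + β / a) := by
    intro k hk
    have hkle : k ≤ (⟨kh - 1, by omega⟩ : Fin N) := by
      have := (hmemA k hk).2
      rw [Fin.le_def]
      simp only []
      omega
    have h1 : e k ≤ e z + β / a := le_of_lt (lt_of_le_of_lt (hmono hkle) hebound)
    have h2 : 0 ≤ t - h k := by linarith [hhA k hk]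
    calc t * e k - h k * e k = (t - h k) * e k := by ring
      _ ≤ (t - h k) * (e z + β / a) := mul_le_mul_of_nonneg_left h1 h2
  have hkey : ∑ k ∈ A, t * e k - ∑ k ∈ A, h k * e k
      ≤ ((A.card : ℝ) * t - ∑ k ∈ A, h k) * (e z + β / a) := by
    rw [← Finset.sum_sub_distrib,
        show ((A.card : ℝ) * t - ∑ k ∈ A, h k) * (e z + β / a)
          = ∑ k ∈ A, (t - h k) * (e z + β / a) by
        rw [← Finset.sum_mul, Finset.sum_sub_distrib, Finset.sum_const, nsmul_eq_mul]]
    exact Finset.sum_le_sum hterm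
  have hS : 0 ≤ (A.card : ℝ) * t - ∑ k ∈ A, h k := by linarith
  have hfin : a * (∑ k ∈ A, t * e k - ∑ k ∈ A, h k * e k)
      ≤ ((A.card : ℝ) * t - ∑ k ∈ A, h k) * (a * e z + β) := by
    have h1 := mul_le_mul_of_nonneg_left hkey ha.le
    have h2 : a * (((A.card : ℝ) * t - ∑ k ∈ A, h k) * (e z + β / a))
        = ((A.card : ℝ) * t - ∑ k ∈ A, h k) * (a * e z + β) := by
      have h3 : a * (β / a) = β := by
        rw [mul_comm]; exact div_mul_cancel₀ β (ne_of_gt ha)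
      calc a * (((A.card : ℝ) * t - ∑ k ∈ A, h k) * (e z + β / a))
          = ((A.card : ℝ) * t - ∑ k ∈ A, h k) * (a * e z) +
            ((A.card : ℝ) * t - ∑ k ∈ A, h k) * (a * (β / a)) := by ring
        _ = ((A.card : ℝ) * t - ∑ k ∈ A, h k) * (a * e z + β) := by rw [h3]; ring
    linarith
  linarith [main, hfin]

/-- Third step of the proof of Theorem 3: among feasible transports supported within the
threshold whose non-first entries are at most `1/(MN)`, the transport `γ*` (which saturates
all of them at `1/(MN)`) has the smallest `G_TV`-regularized objective. -/
theorem stmt_10 (M N : ℕ) (hM : 1 ≤ M) (hN : 1 < N)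
    (d : Fin M → Fin N → ℝ) (hd : ∀ i j, 0 ≤ d i j)
    (C α : ℝ) (hC : 0 < C) (hα0 : 0 < α) (hα1 : α ≤ 1)
    (σ : Fin M → Equiv.Perm (Fin N))
    (hsort : ∀ i, Monotone fun k => d i (σ i k))
    (D : Fin M → ℕ → ℝ) (hD : ∀ i (l : Fin N), D i (l : ℕ) = d i (σ i l))
    -- `k̂_i = max {k ∈ [N] : d_{i j_k^i} − d_{i j_1^i} < θ}` where `θ = (1-α)C/α`
    (khat : Fin M → ℕ)
    (hkhat1 : ∀ i, 1 ≤ khat i) (hkhat2 : ∀ i, khat i ≤ N)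
    (hkhat3 : ∀ i, D i (khat i - 1) - D i 0 < (1 - α) * C / α)
    (hkhat4 : ∀ i k, 1 ≤ k → k ≤ N → D i (k - 1) - D i 0 < (1 - α) * C / α → k ≤ khat i)
    (L : (Fin M → Fin N → ℝ) → ℝ)
    (hL : ∀ γ, L γ = (α / C) * (∑ i, ∑ j, γ i j * d i j)
      + (1 - α) * ((1 / 2) * ∑ i, ∑ j, |γ i j - 1 / ((M : ℝ) * N)|))
    -- the transport `γ*`
    (γstar : Fin M → Fin N → ℝ)
    (hγstark : ∀ i (k : Fin N), (k : ℕ) ≠ 0 →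
      γstar i (σ i k) = if (k : ℕ) < khat i then 1 / ((M : ℝ) * N) else 0)
    (hγstar0 : ∀ i, γstar i (σ i ⟨0, by omega⟩) =
      1 / (M : ℝ) - ∑ k ∈ Finset.univ.filter (fun k : Fin N => (k : ℕ) ≠ 0), γstar i (σ i k))
    -- `γ'''` is feasible, supported within the threshold, and capped at `1/(MN)`
    (γ''' : Fin M → Fin N → ℝ)
    (hγ'''1 : ∀ i j, 0 ≤ γ''' i j) (hγ'''2 : ∀ i, ∑ j, γ''' i j = 1 / (M : ℝ))
    (hγ'''3 : ∀ i (k : Fin N), khat i ≤ (k : ℕ) → γ''' i (σ i k) = 0)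
    (hγ'''4 : ∀ i (k : Fin N), 1 ≤ (k : ℕ) → (k : ℕ) < khat i →
      γ''' i (σ i k) ≤ 1 / ((M : ℝ) * N)) :
    L γstar ≤ L γ''' := by
  have hM0 : (0:ℝ) < M := by exact_mod_cast Nat.lt_of_lt_of_le Nat.zero_lt_one hM
  have hN0 : (0:ℝ) < N := by exact_mod_cast Nat.lt_of_lt_of_le Nat.zero_lt_one hN.le
  set t : ℝ := 1 / ((M:ℝ) * N) with ht_def
  have ht : 0 < t := by rw [ht_def]; positivity
  have hMt : 1 / (M:ℝ) = N * t := by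
    rw [ht_def]; field_simp
  have ha : 0 < α / C := div_pos hα0 hC
  have hβ : (0:ℝ) ≤ 1 - α := by linarith
  have key : ∀ i : Fin M,
      (α/C) * (∑ j, γstar i j * d i j) + (1-α) * ((1/2) * ∑ j, |γstar i j - t|)
        ≤ (α/C) * (∑ j, γ''' i j * d i j) + (1-α) * ((1/2) * ∑ j, |γ''' i j - t|) := by
    intro i
    have hkk : khat i - 1 < N := by have := hkhat2 i; omega
    have hD1 : D i (khat i - 1) = d i (σ i ⟨khat i - 1, hkk⟩) := by
      simpa using hD i ⟨khat i - 1, hkk⟩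
    have hD0 : D i 0 = d i (σ i ⟨0, by omega⟩) := by
      simpa using hD i ⟨0, by omega⟩
    have h3 := hkhat3 i
    rw [hD1, hD0] at h3
    have hthr : (α/C) * (d i (σ i ⟨khat i - 1, hkk⟩) - d i (σ i ⟨0, by omega⟩)) < 1 - α := by
      have heq : (α/C) * ((1-α) * C / α) = 1 - α := by
        field_simp
      calc (α/C) * (d i (σ i ⟨khat i - 1, hkk⟩) - d i (σ i ⟨0, by omega⟩))
          < (α/C) * ((1-α) * C / α) := by
            exact mul_lt_mul_of_pos_left h3 ha
        _ = 1 - α := heq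
    have hg0 : γstar i (σ i ⟨0, by omega⟩)
        = (N:ℝ) * t - ∑ k ∈ univ.filter (fun k : Fin N => (k : ℕ) ≠ 0), γstar i (σ i k) := by
      rw [hγstar0 i, hMt]
    have hh2 : ∑ k, γ''' i (σ i k) = (N:ℝ) * t := by
      rw [Equiv.sum_comp (σ i) (γ''' i), hγ'''2 i, hMt]
    have := row_ineq hN (hkhat1 i) (hkhat2 i)
      (fun k => d i (σ i k)) (fun k => γstar i (σ i k)) (fun k => γ''' i (σ i k))
      (hsort i) ha hβ ht hthr (hγstark i) hg0 (fun k => hγ'''1 i (σ i k)) hh2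
      (hγ'''3 i) (hγ'''4 i)
    calc (α/C) * (∑ j, γstar i j * d i j) + (1-α) * ((1/2) * ∑ j, |γstar i j - t|)
        = (α/C) * (∑ k, γstar i (σ i k) * d i (σ i k))
          + (1-α) * ((1/2) * ∑ k, |γstar i (σ i k) - t|) := by
          rw [Equiv.sum_comp (σ i) (fun j => γstar i j * d i j),
              Equiv.sum_comp (σ i) (fun j => |γstar i j - t|)]
      _ ≤ (α/C) * (∑ k, γ''' i (σ i k) * d i (σ i k))
          + (1-α) * ((1/2) * ∑ k, |γ''' i (σ i k) - t|) := this
      _ = (α/C) * (∑ j, γ''' i j * d i j) + (1-α) * ((1/2) * ∑ j, |γ''' i j - t|) := by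
          rw [Equiv.sum_comp (σ i) (fun j => γ''' i j * d i j),
              Equiv.sum_comp (σ i) (fun j => |γ''' i j - t|)]
  rw [hL, hL]
  have comb : ∀ γ : Fin M → Fin N → ℝ,
      (α/C) * (∑ i, ∑ j, γ i j * d i j) + (1-α) * ((1/2) * ∑ i, ∑ j, |γ i j - t|)
        = ∑ i, ((α/C) * (∑ j, γ i j * d i j) + (1-α) * ((1/2) * ∑ j, |γ i j - t|)) := by
    intro γ
    rw [Finset.sum_add_distrib, ← Finset.mul_sum]
    congr 1
    rw [← Finset.mul_sum, ← Finset.mul_sum]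
  rw [comb, comb]
  exact Finset.sum_le_sum (fun i _ => key i)
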